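/- Let Y be an S2-valued random variable with law ν, and ξ1, ξ2 uniform on [0,1] with Y, ξ1, ξ2 mutually independent. Suppose G1, G2 : S2×[0,1] → S1 are Borel measurable and each Xi = Gi(Y,ξi) is C-compatible with Y (E[h(Y)|F^{Xi}_α ∨ F^Y_α] = E[h(Y)|F^Y_α] for each α and bounded Borel h). Then X1 and X2 are jointly C-compatible with Y: for each α ∈ A and each bounded Borel h on S2, E[h(Y)|F^{X1}_α ∨ F^{X2}_α ∨ F^Y_α] = E[h(Y)|F^Y_α] a.s. -/

import Mathlib

/-!
Conditionally on `Y`, the randomizations `ξ1, ξ2` are independent uniforms, so `X1 = G1(Y, ξ1)`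
and `X2 = G2(Y, ξ2)` are conditionally independent given `σ(Y)`: integrating out `ξ1, ξ2` turns
`P(A₁ ∩ A₂ | σ(Y))` into `P(A₁ | σ(Y)) P(A₂ | σ(Y))` for `Aᵢ ∈ F^{Xi}_α`. Compatibility of `Xi` is
conditional independence of `F^{Xi}_α` and `σ(Y)` given `F^Y_α`, which read the other way says
`P(Aᵢ | σ(Y)) = P(Aᵢ | F^Y_α)`. So `P(A₁ ∩ A₂ | σ(Y))` is `F^Y_α`-measurable, and conditioning
through `σ(Y)` gives `∫_{A₁ ∩ A₂ ∩ B} h(Y) = ∫_{A₁ ∩ A₂ ∩ B} E[h(Y) | F^Y_α]` for `B ∈ F^Y_α`.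
These sets form a π-system generating `F^{X1}_α ∨ F^{X2}_α ∨ F^Y_α`.
-/

open MeasureTheory ProbabilityTheory MeasurableSpace

theorem norm_indicator_one_le_one {α : Type*} (s : Set α) (a : α) :
    ‖s.indicator (1 : α → ℝ) a‖ ≤ 1 := by
  simpa using norm_indicator_le_norm_self (1 : α → ℝ) a

section PiSystem

variable {Ω : Type*}

def interSets₃ (m₁ m₂ m₃ : MeasurableSpace Ω) : Set (Set Ω) :=
  {r | ∃ s t u, MeasurableSet[m₁] s ∧ MeasurableSet[m₂] t ∧ MeasurableSet[m₃] u ∧ s ∩ t ∩ u = r}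

theorem isPiSystem_interSets₃ (m₁ m₂ m₃ : MeasurableSpace Ω) :
    IsPiSystem (interSets₃ m₁ m₂ m₃) := by
  rintro _ ⟨s, t, u, hs, ht, hu, rfl⟩ _ ⟨s', t', u', hs', ht', hu', rfl⟩ -
  refine ⟨s ∩ s', t ∩ t', u ∩ u', hs.inter hs', ht.inter ht', hu.inter hu', ?_⟩
  ext ω
  simp only [Set.mem_inter_iff]
  tauto

theorem univ_mem_interSets₃ (m₁ m₂ m₃ : MeasurableSpace Ω) :
    Set.univ ∈ interSets₃ m₁ m₂ m₃ :=
  ⟨_, _, _, .univ, .univ, .univ, by simp⟩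

theorem sup_sup_eq_generateFrom_interSets₃ (m₁ m₂ m₃ : MeasurableSpace Ω) :
    m₁ ⊔ m₂ ⊔ m₃ = generateFrom (interSets₃ m₁ m₂ m₃) := by
  refine le_antisymm (sup_le (sup_le ?_ ?_) ?_) (generateFrom_le ?_)
  · exact fun s hs => measurableSet_generateFrom ⟨s, _, _, hs, .univ, .univ, by simp⟩
  · exact fun t ht => measurableSet_generateFrom ⟨_, t, _, .univ, ht, .univ, by simp⟩
  · exact fun u hu => measurableSet_generateFrom ⟨_, _, u, .univ, .univ, hu, by simp⟩
  · rintro _ ⟨s, t, u, hs, ht, hu, rfl⟩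
    exact ((le_sup_left.trans le_sup_left : m₁ ≤ _) s hs |>.inter
      ((le_sup_right.trans le_sup_left : m₂ ≤ _) t ht)).inter ((le_sup_right : m₃ ≤ _) u hu)

theorem setIntegral_eq_of_isPiSystem {E : Type*} [NormedAddCommGroup E] [NormedSpace ℝ E]
    {m : MeasurableSpace Ω} [mΩ : MeasurableSpace Ω] {P : Measure Ω} (hm : m ≤ mΩ)
    {S : Set (Set Ω)} (hgen : m = generateFrom S) (hpi : IsPiSystem S) (huniv : Set.univ ∈ S)
    {f g : Ω → E} (hf : Integrable f P) (hg : Integrable g P)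
    (hS : ∀ s ∈ S, ∫ ω in s, f ω ∂P = ∫ ω in s, g ω ∂P) {t : Set Ω} (ht : MeasurableSet[m] t) :
    ∫ ω in t, f ω ∂P = ∫ ω in t, g ω ∂P := by
  induction t, ht using induction_on_inter hgen hpi with
  | empty => simp
  | basic s hs => exact hS s hs
  | compl t htm ht =>
    have hunivS := hS _ huniv
    rw [setIntegral_univ, setIntegral_univ] at hunivS
    rw [setIntegral_compl (hm t htm) hf, setIntegral_compl (hm t htm) hg, ht, hunivS]
  | iUnion s hdisj hsm hs =>
    rw [integral_iUnion (fun i => hm _ (hsm i)) hdisj hf.integrableOn,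
      integral_iUnion (fun i => hm _ (hsm i)) hdisj hg.integrableOn]
    exact tsum_congr hs

end PiSystem

section CondExp

variable {Ω : Type*} {m 𝒢 𝒴 ℋ ℋ₁ ℋ₂ : MeasurableSpace Ω} [mΩ : MeasurableSpace Ω]
  {P : Measure Ω}

theorem setIntegral_eq_integral_indicator_one_mul {s : Set Ω} (hs : MeasurableSet s)
    (f : Ω → ℝ) : ∫ ω in s, f ω ∂P = ∫ ω, s.indicator 1 ω * f ω ∂P := by
  rw [← integral_indicator hs]
  simp_rw [← Set.indicator_mul_left, Pi.one_apply, one_mul]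

variable [IsFiniteMeasure P]

theorem integral_mul_condExp_of_bound (hm : m ≤ mΩ) {φ g : Ω → ℝ}
    (hφ : AEStronglyMeasurable[m] φ P) {c : ℝ} (hφc : ∀ᵐ ω ∂P, ‖φ ω‖ ≤ c)
    (hg : Integrable g P) :
    ∫ ω, φ ω * g ω ∂P = ∫ ω, φ ω * P[g|m] ω ∂P := by
  rw [← integral_condExp hm]
  exact integral_congr_ae (condExp_stronglyMeasurable_mul_of_bound₀ hm hφ hg c hφc)

theorem integral_mul_eq_integral_condExp_mul (hm : m ≤ mΩ) {W g : Ω → ℝ}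
    (hW : AEStronglyMeasurable W P) {c : ℝ} (hWc : ∀ᵐ ω ∂P, ‖W ω‖ ≤ c)
    (hg : StronglyMeasurable[m] g) (hgi : Integrable g P) :
    ∫ ω, W ω * g ω ∂P = ∫ ω, P[W|m] ω * g ω ∂P := by
  rw [← integral_condExp hm]
  exact integral_congr_ae (condExp_mul_of_stronglyMeasurable_right hg
    (hgi.bdd_mul hW hWc) (Integrable.of_bound hW c hWc))

theorem integral_condExp_mul_eq_integral_mul_condExp (hm : m ≤ mΩ) {f g : Ω → ℝ}
    (hf : AEStronglyMeasurable f P) {c : ℝ} (hfc : ∀ᵐ ω ∂P, ‖f ω‖ ≤ c) (hg : Integrable g P) :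
    ∫ ω, P[f|m] ω * g ω ∂P = ∫ ω, f ω * P[g|m] ω ∂P := by
  rw [integral_mul_condExp_of_bound hm stronglyMeasurable_condExp.aestronglyMeasurable
    (ae_bdd_norm_condExp_of_ae_bdd_norm hfc) hg,
    integral_mul_eq_integral_condExp_mul hm hf hfc stronglyMeasurable_condExp integrable_condExp]

theorem integral_mul_condExp_eq_of_aestronglyMeasurable_condExp (h𝒢𝒴 : 𝒢 ≤ 𝒴) (h𝒴 : 𝒴 ≤ mΩ)
    {W g : Ω → ℝ} (hW : AEStronglyMeasurable W P) {c : ℝ} (hWc : ∀ᵐ ω ∂P, ‖W ω‖ ≤ c)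
    (hW𝒢 : AEStronglyMeasurable[𝒢] (P[W|𝒴]) P) (hg : StronglyMeasurable[𝒴] g)
    (hgi : Integrable g P) :
    ∫ ω, W ω * g ω ∂P = ∫ ω, W ω * P[g|𝒢] ω ∂P := by
  rw [integral_mul_eq_integral_condExp_mul h𝒴 hW hWc hg hgi,
    integral_mul_condExp_of_bound (h𝒢𝒴.trans h𝒴) hW𝒢 (ae_bdd_norm_condExp_of_ae_bdd_norm hWc) hgi,
    integral_mul_eq_integral_condExp_mul h𝒴 hW hWc (stronglyMeasurable_condExp.mono h𝒢𝒴)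
      integrable_condExp]

/-- The hypothesis is the conditional independence of `ℋ` and `𝒴` given `𝒢`. -/
theorem condExp_ae_eq_of_condExp_sup_indicator_eq (h𝒢𝒴 : 𝒢 ≤ 𝒴) (h𝒴 : 𝒴 ≤ mΩ) (hℋ : ℋ ≤ mΩ)
    (hcompat : ∀ u, MeasurableSet[𝒴] u →
      P[u.indicator 1|ℋ ⊔ 𝒢] =ᵐ[P] P[u.indicator (1 : Ω → ℝ)|𝒢])
    {Z : Ω → ℝ} (hZ : StronglyMeasurable[ℋ] Z) (hZi : Integrable Z P) :
    P[Z|𝒴] =ᵐ[P] P[Z|𝒢] := by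
  refine (ae_eq_condExp_of_forall_setIntegral_eq h𝒴 hZi
    (fun _ _ _ => integrable_condExp.integrableOn) (fun u hu _ => ?_)
    (stronglyMeasurable_condExp.mono h𝒢𝒴).aestronglyMeasurable).symm
  have hu' : MeasurableSet u := h𝒴 u hu
  have hI : AEStronglyMeasurable (u.indicator (1 : Ω → ℝ)) P :=
    (stronglyMeasurable_one.indicator hu').aestronglyMeasurable
  have hIc : ∀ᵐ ω ∂P, ‖u.indicator (1 : Ω → ℝ) ω‖ ≤ 1 :=
    ae_of_all _ (norm_indicator_one_le_one u)
  calc ∫ ω in u, P[Z|𝒢] ω ∂P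
      = ∫ ω, u.indicator 1 ω * P[Z|𝒢] ω ∂P := setIntegral_eq_integral_indicator_one_mul hu' _
    _ = ∫ ω, P[u.indicator 1|𝒢] ω * Z ω ∂P :=
      (integral_condExp_mul_eq_integral_mul_condExp (h𝒢𝒴.trans h𝒴) hI hIc hZi).symm
    _ = ∫ ω, P[u.indicator 1|ℋ ⊔ 𝒢] ω * Z ω ∂P := by
      refine integral_congr_ae ?_
      filter_upwards [hcompat u hu] with ω hω
      rw [hω]
    _ = ∫ ω, u.indicator 1 ω * Z ω ∂P :=
      (integral_mul_eq_integral_condExp_mul (sup_le hℋ (h𝒢𝒴.trans h𝒴)) hI hIc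
        (hZ.mono le_sup_left) hZi).symm
    _ = ∫ ω in u, Z ω ∂P := (setIntegral_eq_integral_indicator_one_mul hu' _).symm

theorem condExp_sup_sup_ae_eq_of_aestronglyMeasurable_condExp_inter (h𝒢𝒴 : 𝒢 ≤ 𝒴)
    (h𝒴 : 𝒴 ≤ mΩ) (hℋ₁ : ℋ₁ ≤ mΩ) (hℋ₂ : ℋ₂ ≤ mΩ)
    (hinter : ∀ s t, MeasurableSet[ℋ₁] s → MeasurableSet[ℋ₂] t →
      AEStronglyMeasurable[𝒢] (P[(s ∩ t).indicator (1 : Ω → ℝ)|𝒴]) P)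
    {f : Ω → ℝ} (hf : StronglyMeasurable[𝒴] f) (hfi : Integrable f P) :
    P[f|ℋ₁ ⊔ ℋ₂ ⊔ 𝒢] =ᵐ[P] P[f|𝒢] := by
  have h𝒢 : 𝒢 ≤ mΩ := h𝒢𝒴.trans h𝒴
  have hle : ℋ₁ ⊔ ℋ₂ ⊔ 𝒢 ≤ mΩ := sup_le (sup_le hℋ₁ hℋ₂) h𝒢
  refine (ae_eq_condExp_of_forall_setIntegral_eq hle hfi
    (fun _ _ _ => integrable_condExp.integrableOn) (fun r hr _ => ?_)
    (stronglyMeasurable_condExp.mono (le_sup_right : 𝒢 ≤ ℋ₁ ⊔ ℋ₂ ⊔ 𝒢)).aestronglyMeasurable).symm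
  refine setIntegral_eq_of_isPiSystem hle (sup_sup_eq_generateFrom_interSets₃ _ _ _)
    (isPiSystem_interSets₃ _ _ _) (univ_mem_interSets₃ _ _ _) integrable_condExp hfi ?_ hr
  rintro _ ⟨s, t, u, hs, ht, hu, rfl⟩
  have hst : MeasurableSet (s ∩ t) := (hℋ₁ s hs).inter (hℋ₂ t ht)
  have hu𝒴 : MeasurableSet[𝒴] u := h𝒢𝒴 u hu
  calc ∫ ω in s ∩ t ∩ u, P[f|𝒢] ω ∂P
      = ∫ ω, (s ∩ t).indicator 1 ω * u.indicator (P[f|𝒢]) ω ∂P := by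
        rw [← setIntegral_indicator (h𝒢 u hu), setIntegral_eq_integral_indicator_one_mul hst]
    _ = ∫ ω, (s ∩ t).indicator 1 ω * P[u.indicator f|𝒢] ω ∂P := by
        refine integral_congr_ae ?_
        filter_upwards [condExp_indicator hfi hu] with ω hω
        rw [hω]
    _ = ∫ ω, (s ∩ t).indicator 1 ω * u.indicator f ω ∂P :=
        (integral_mul_condExp_eq_of_aestronglyMeasurable_condExp h𝒢𝒴 h𝒴
          (stronglyMeasurable_one.indicator hst).aestronglyMeasurable
          (ae_of_all _ (norm_indicator_one_le_one _)) (hinter s t hs ht)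
          (hf.indicator hu𝒴) (hfi.indicator (h𝒴 u hu𝒴))).symm
    _ = ∫ ω in s ∩ t ∩ u, f ω ∂P := by
        rw [← setIntegral_indicator (h𝒢 u hu), setIntegral_eq_integral_indicator_one_mul hst]

end CondExp

section Freezing

variable {Ω β γ : Type*} [mΩ : MeasurableSpace Ω] [mβ : MeasurableSpace β] [MeasurableSpace γ]
  {P : Measure Ω} [IsFiniteMeasure P] {Y : Ω → β}

theorem condExp_comp_prodMk_ae_eq_integral {E : Type*} [NormedAddCommGroup E] [NormedSpace ℝ E]
    [CompleteSpace E] [StandardBorelSpace γ] [Nonempty γ] {Z : Ω → γ}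
    (hY : Measurable Y) (hZ : Measurable Z) {μ : Measure γ} [IsFiniteMeasure μ]
    (hlaw : P.map (fun ω => (Y ω, Z ω)) = (P.map Y).prod μ) {F : β × γ → E}
    (hF : StronglyMeasurable F) (hFi : Integrable (fun ω => F (Y ω, Z ω)) P) :
    P[fun ω => F (Y ω, Z ω)|mβ.comap Y] =ᵐ[P] fun ω => ∫ z, F (Y ω, z) ∂μ := by
  have hκ : condDistrib Z Y P =ᵐ[P.map Y] Kernel.const β μ :=
    condDistrib_ae_eq_of_measure_eq_compProd Y hZ.aemeasurable
      (by rw [Measure.compProd_const, hlaw])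
  filter_upwards [condExp_prod_ae_eq_integral_condDistrib hY hZ.aemeasurable hF hFi,
    ae_of_ae_map hY.aemeasurable hκ] with ω hω hκω
  rw [hω, hκω, Kernel.const_apply]

theorem condExp_indicator_inter_ae_eq_mul {γ₁ γ₂ : Type*} [MeasurableSpace γ₁]
    [MeasurableSpace γ₂] [StandardBorelSpace γ₁] [Nonempty γ₁] [StandardBorelSpace γ₂]
    [Nonempty γ₂] {ξ₁ : Ω → γ₁} {ξ₂ : Ω → γ₂} (hY : Measurable Y) (hξ₁ : Measurable ξ₁)
    (hξ₂ : Measurable ξ₂) {ν : Measure β} {μ₁ : Measure γ₁} {μ₂ : Measure γ₂}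
    [IsProbabilityMeasure μ₁] [IsProbabilityMeasure μ₂]
    (hlaw : P.map (fun ω => (Y ω, ξ₁ ω, ξ₂ ω)) = ν.prod (μ₁.prod μ₂))
    {E₁ : Set (β × γ₁)} {E₂ : Set (β × γ₂)} (hE₁ : MeasurableSet E₁) (hE₂ : MeasurableSet E₂) :
    P[((fun ω => (Y ω, ξ₁ ω)) ⁻¹' E₁ ∩ (fun ω => (Y ω, ξ₂ ω)) ⁻¹' E₂).indicator 1|mβ.comap Y]
      =ᵐ[P] P[((fun ω => (Y ω, ξ₁ ω)) ⁻¹' E₁).indicator 1|mβ.comap Y] *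
        P[((fun ω => (Y ω, ξ₂ ω)) ⁻¹' E₂).indicator (1 : Ω → ℝ)|mβ.comap Y] := by
  have hT : Measurable fun ω => (Y ω, ξ₁ ω, ξ₂ ω) := hY.prodMk (hξ₁.prodMk hξ₂)
  have hν : P.map Y = ν := calc
    P.map Y = (P.map fun ω => (Y ω, ξ₁ ω, ξ₂ ω)).map Prod.fst := by
      rw [Measure.map_map measurable_fst hT]; rfl
    _ = ν := by simp [hlaw]
  subst hν
  have freeze : ∀ F : β × γ₁ × γ₂ → ℝ, Measurable F → (∀ x, ‖F x‖ ≤ 1) →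
      P[fun ω => F (Y ω, ξ₁ ω, ξ₂ ω)|mβ.comap Y] =ᵐ[P]
        fun ω => ∫ z, F (Y ω, z) ∂(μ₁.prod μ₂) := fun F hF hF1 =>
    condExp_comp_prodMk_ae_eq_integral hY (hξ₁.prodMk hξ₂) hlaw hF.stronglyMeasurable
      (Integrable.of_bound (hF.comp hT).aestronglyMeasurable 1 (ae_of_all _ fun ω => hF1 _))
  have hI₁ : Measurable fun x : β × γ₁ × γ₂ => E₁.indicator (1 : β × γ₁ → ℝ) (x.1, x.2.1) :=
    (measurable_one.indicator hE₁).comp (by fun_prop)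
  have hI₂ : Measurable fun x : β × γ₁ × γ₂ => E₂.indicator (1 : β × γ₂ → ℝ) (x.1, x.2.2) :=
    (measurable_one.indicator hE₂).comp (by fun_prop)
  have h₁ : P[((fun ω => (Y ω, ξ₁ ω)) ⁻¹' E₁).indicator (1 : Ω → ℝ)|mβ.comap Y] =ᵐ[P]
      fun ω => ∫ u, E₁.indicator 1 (Y ω, u) ∂μ₁ :=
    (freeze _ hI₁ fun _ => norm_indicator_one_le_one _ _).trans
      (ae_of_all _ fun ω =>
        (integral_fun_fst fun u => E₁.indicator (1 : β × γ₁ → ℝ) (Y ω, u)).trans (by simp))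
  have h₂ : P[((fun ω => (Y ω, ξ₂ ω)) ⁻¹' E₂).indicator (1 : Ω → ℝ)|mβ.comap Y] =ᵐ[P]
      fun ω => ∫ v, E₂.indicator 1 (Y ω, v) ∂μ₂ :=
    (freeze _ hI₂ fun _ => norm_indicator_one_le_one _ _).trans
      (ae_of_all _ fun ω =>
        (integral_fun_snd fun v => E₂.indicator (1 : β × γ₂ → ℝ) (Y ω, v)).trans (by simp))
  have h₁₂ : P[((fun ω => (Y ω, ξ₁ ω)) ⁻¹' E₁ ∩ (fun ω => (Y ω, ξ₂ ω)) ⁻¹' E₂).indicator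
      (1 : Ω → ℝ)|mβ.comap Y] =ᵐ[P]
      fun ω => (∫ u, E₁.indicator 1 (Y ω, u) ∂μ₁) * ∫ v, E₂.indicator 1 (Y ω, v) ∂μ₂ := by
    rw [Set.inter_indicator_one]
    refine (freeze (fun x => E₁.indicator 1 (x.1, x.2.1) * E₂.indicator 1 (x.1, x.2.2))
      (hI₁.mul hI₂) fun x => ?_).trans (ae_of_all _ fun ω => integral_prod_mul
      (fun u => E₁.indicator (1 : β × γ₁ → ℝ) (Y ω, u)) fun v => E₂.indicator 1 (Y ω, v))
    rw [norm_mul]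
    exact mul_le_one₀ (norm_indicator_one_le_one _ _) (norm_nonneg _)
      (norm_indicator_one_le_one _ _)
  filter_upwards [h₁₂, h₁, h₂] with ω h h1 h2
  rw [Pi.mul_apply, h, h1, h2]

end Freezing

section Compatibility

variable {Ω S₁ S₂ : Type*} {ℬ₁ : MeasurableSpace S₁} {ℬ₂ : MeasurableSpace S₂}
  [mΩ : MeasurableSpace Ω] [mS₁ : MeasurableSpace S₁] [mS₂ : MeasurableSpace S₂]
  {P : Measure Ω} [IsFiniteMeasure P]

theorem condExp_indicator_preimage_ae_eq_of_compatible {X : Ω → S₁} {Y : Ω → S₂}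
    (hX : Measurable X) (hY : Measurable Y) (hℬ₁ : ℬ₁ ≤ mS₁) (hℬ₂ : ℬ₂ ≤ mS₂)
    (hcompat : ∀ h : S₂ → ℝ, Measurable h → (∃ C, ∀ x, |h x| ≤ C) →
      P[fun ω => h (Y ω)|ℬ₁.comap X ⊔ ℬ₂.comap Y] =ᵐ[P] P[fun ω => h (Y ω)|ℬ₂.comap Y])
    {a : Set S₁} (ha : MeasurableSet[ℬ₁] a) :
    P[(X ⁻¹' a).indicator 1|mS₂.comap Y] =ᵐ[P] P[(X ⁻¹' a).indicator (1 : Ω → ℝ)|ℬ₂.comap Y] := by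
  refine condExp_ae_eq_of_condExp_sup_indicator_eq (comap_mono hℬ₂) hY.comap_le
    ((comap_mono hℬ₁).trans hX.comap_le) ?_ (stronglyMeasurable_one.indicator ⟨a, ha, rfl⟩)
    ((integrable_const 1).indicator (hX (hℬ₁ a ha)))
  rintro _ ⟨D, hD, rfl⟩
  exact hcompat (D.indicator 1) (measurable_one.indicator hD)
    ⟨1, fun y => by simpa using norm_indicator_one_le_one D y⟩

end Compatibility

theorem stmt8_general
    {S1 S2 : Type} [mS1 : MeasurableSpace S1] [mS2 : MeasurableSpace S2] (ν : Measure S2)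
    {Ω : Type} [MeasurableSpace Ω] (P : Measure Ω) [IsProbabilityMeasure P]
    (Y : Ω → S2) (ξ1 ξ2 : Ω → ℝ)
    (hY : Measurable Y) (hξ1 : Measurable ξ1) (hξ2 : Measurable ξ2)
    (hlaw : P.map (fun ω => (Y ω, ξ1 ω, ξ2 ω)) =
      ν.prod ((volume.restrict (Set.Icc (0:ℝ) 1)).prod (volume.restrict (Set.Icc (0:ℝ) 1))))
    (G1 G2 : S2 × ℝ → S1) (hG1 : Measurable G1) (hG2 : Measurable G2)
    (X1 X2 : Ω → S1)
    (hX1 : X1 = fun ω => G1 (Y ω, ξ1 ω)) (hX2 : X2 = fun ω => G2 (Y ω, ξ2 ω))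
    {A : Type}
    (B1 : A → MeasurableSpace S1) (hB1 : ∀ α, B1 α ≤ mS1)
    (B2 : A → MeasurableSpace S2) (hB2 : ∀ α, B2 α ≤ mS2)
    (hcompat1 : ∀ (α : A) (h : S2 → ℝ), Measurable h → (∃ C, ∀ x, |h x| ≤ C) →
      P[fun ω => h (Y ω)|MeasurableSpace.comap X1 (B1 α) ⊔ MeasurableSpace.comap Y (B2 α)]
        =ᵐ[P] P[fun ω => h (Y ω)|MeasurableSpace.comap Y (B2 α)])
    (hcompat2 : ∀ (α : A) (h : S2 → ℝ), Measurable h → (∃ C, ∀ x, |h x| ≤ C) →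
      P[fun ω => h (Y ω)|MeasurableSpace.comap X2 (B1 α) ⊔ MeasurableSpace.comap Y (B2 α)]
        =ᵐ[P] P[fun ω => h (Y ω)|MeasurableSpace.comap Y (B2 α)]) :
    ∀ (α : A) (h : S2 → ℝ), Measurable h → (∃ C, ∀ x, |h x| ≤ C) →
      P[fun ω => h (Y ω)|MeasurableSpace.comap X1 (B1 α) ⊔ MeasurableSpace.comap X2 (B1 α)
          ⊔ MeasurableSpace.comap Y (B2 α)]
        =ᵐ[P] P[fun ω => h (Y ω)|MeasurableSpace.comap Y (B2 α)] := by
  intro α h hh ⟨C, hC⟩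
  subst hX1 hX2
  have : IsProbabilityMeasure (volume.restrict (Set.Icc (0:ℝ) 1)) := ⟨by simp⟩
  have hX₁ : Measurable fun ω => G1 (Y ω, ξ1 ω) := hG1.comp (hY.prodMk hξ1)
  have hX₂ : Measurable fun ω => G2 (Y ω, ξ2 ω) := hG2.comp (hY.prodMk hξ2)
  refine condExp_sup_sup_ae_eq_of_aestronglyMeasurable_condExp_inter (comap_mono (hB2 α))
    hY.comap_le ((comap_mono (hB1 α)).trans hX₁.comap_le)
    ((comap_mono (hB1 α)).trans hX₂.comap_le) ?_
    (hh.comp (comap_measurable Y)).stronglyMeasurable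
    (Integrable.of_bound (hh.comp hY).aestronglyMeasurable C (ae_of_all _ fun ω => hC (Y ω)))
  rintro _ _ ⟨a₁, ha₁, rfl⟩ ⟨a₂, ha₂, rfl⟩
  have hindep := condExp_indicator_inter_ae_eq_mul hY hξ1 hξ2 hlaw
    (hG1 (hB1 α _ ha₁)) (hG2 (hB1 α _ ha₂))
  have h₁ := condExp_indicator_preimage_ae_eq_of_compatible hX₁ hY (hB1 α) (hB2 α)
    (hcompat1 α) ha₁
  have h₂ := condExp_indicator_preimage_ae_eq_of_compatible hX₂ hY (hB1 α) (hB2 α)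
    (hcompat2 α) ha₂
  exact (stronglyMeasurable_condExp.mul stronglyMeasurable_condExp).aestronglyMeasurable.congr
    (hindep.trans (h₁.mul h₂)).symm

/-- Lemma 2.11 of Kurtz: two compatible randomized solutions `G1(Y,ξ1)`, `G2(Y,ξ2)`,
with `ξ1`, `ξ2` uniform and `Y, ξ1, ξ2` mutually independent, are automatically
jointly compatible with `Y`. -/
theorem stmt8
    {S1 S2 : Type} [mS1 : MeasurableSpace S1] [TopologicalSpace S1] [PolishSpace S1] [BorelSpace S1]
    [mS2 : MeasurableSpace S2] [TopologicalSpace S2] [PolishSpace S2] [BorelSpace S2]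
    (ν : Measure S2) [IsProbabilityMeasure ν]
    {Ω : Type} [MeasurableSpace Ω] (P : Measure Ω) [IsProbabilityMeasure P]
    (Y : Ω → S2) (ξ1 ξ2 : Ω → ℝ)
    (hY : Measurable Y) (hξ1 : Measurable ξ1) (hξ2 : Measurable ξ2)
    (hlaw : P.map (fun ω => (Y ω, ξ1 ω, ξ2 ω)) =
      ν.prod ((volume.restrict (Set.Icc (0:ℝ) 1)).prod (volume.restrict (Set.Icc (0:ℝ) 1))))
    (G1 G2 : S2 × ℝ → S1) (hG1 : Measurable G1) (hG2 : Measurable G2)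
    (X1 X2 : Ω → S1)
    (hX1 : X1 = fun ω => G1 (Y ω, ξ1 ω)) (hX2 : X2 = fun ω => G2 (Y ω, ξ2 ω))
    {A : Type}
    (B1 : A → MeasurableSpace S1) (hB1 : ∀ α, B1 α ≤ mS1)
    (B2 : A → MeasurableSpace S2) (hB2 : ∀ α, B2 α ≤ mS2)
    (hcompat1 : ∀ (α : A) (h : S2 → ℝ), Measurable h → (∃ C, ∀ x, |h x| ≤ C) →
      P[fun ω => h (Y ω)|MeasurableSpace.comap X1 (B1 α) ⊔ MeasurableSpace.comap Y (B2 α)]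
        =ᵐ[P] P[fun ω => h (Y ω)|MeasurableSpace.comap Y (B2 α)])
    (hcompat2 : ∀ (α : A) (h : S2 → ℝ), Measurable h → (∃ C, ∀ x, |h x| ≤ C) →
      P[fun ω => h (Y ω)|MeasurableSpace.comap X2 (B1 α) ⊔ MeasurableSpace.comap Y (B2 α)]
        =ᵐ[P] P[fun ω => h (Y ω)|MeasurableSpace.comap Y (B2 α)]) :
    ∀ (α : A) (h : S2 → ℝ), Measurable h → (∃ C, ∀ x, |h x| ≤ C) →
      P[fun ω => h (Y ω)|MeasurableSpace.comap X1 (B1 α) ⊔ MeasurableSpace.comap X2 (B1 α)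
          ⊔ MeasurableSpace.comap Y (B2 α)]
        =ᵐ[P] P[fun ω => h (Y ω)|MeasurableSpace.comap Y (B2 α)] :=
  stmt8_general (mS1 := mS1) (mS2 := mS2) ν P Y ξ1 ξ2 hY hξ1 hξ2 hlaw G1 G2 hG1 hG2 X1 X2 hX1 hX2 B1
    hB1 B2 hB2 hcompat1 hcompat2
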